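/- arXiv:1807.01858 — 3 statements merged into one kernel-verified Lean document; each statement's English description precedes it below -/
import Mathlib

section
/- Let q = 2^l and β a nonzero element of F_{q^6}. If the quadratic equation u^2 + (β^{q^4-1} + β^{q^2-1} + 1)u + β^{q^2-1} = 0 has a solution u in F_{q^6}, then u^{q^2+1} + u + 1 = 0. (Menezes-Teske-Weng conjecture.) -/
/-!
Let `σ x = x ^ q ^ 2`, an automorphism of order three of `K`, and `b = β ^ (q ^ 2 - 1) = σ β / β`,
so that `b * σ b * σ² b = 1` and `β ^ (q ^ 4 - 1) = σ b * b`. Write `v = σ u`. In characteristic two,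
the equation for `u` and its conjugate (the equation for `v`) give
`(u * v + u + 1) * ((u + 1) * v + σ b * u) = 0`. If `u * v + u + 1 ≠ 0`, then its conjugates do not
vanish either, so the second factor vanishes for each of the three cyclic pairs `(u, v)`, `(v, σ v)`,
`(σ v, u)`. These are three Möbius relations whose composite is the identity only if
`σ b * b + b + 1 = 0`; then `u ^ 2 = b`, and `(u + 1) * (u * v + u + 1) = 0` after all.
-/

theorem mul_add_add_one_eq_zero_of_mobius_cycle {K : Type*} [Field K] {b c d u v w : K}
    (hbcd : b * c * d = 1) (hu : u ≠ 0) (huv : (u + 1) * v = c * u) (hvw : (v + 1) * w = d * v)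
    (hwu : (w + 1) * u = b * w) : c * d + c + 1 = 0 := by
  have hb : b ≠ 0 := left_ne_zero_of_mul (left_ne_zero_of_mul_eq_one hbcd)
  have hc : c ≠ 0 := right_ne_zero_of_mul (left_ne_zero_of_mul_eq_one hbcd)
  have hd : d ≠ 0 := right_ne_zero_of_mul_eq_one hbcd
  have hw : w ≠ 0 := by
    rintro rfl
    exact hu (by simpa [hb] using hwu)
  have hv : v ≠ 0 := by
    rintro rfl
    exact hw (by simpa [hd] using hvw)
  -- In the reciprocals `1 / u, 1 / v, 1 / w` the relations are affine and compose to
  -- `(b * c * d - 1) / u = c * d + c + 1`.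
  have key : u * v * w * (c * d + c + 1) = 0 := by
    linear_combination v * w * hbcd + c * d * v * hwu + c * u * hvw + w * huv
  simpa [hu, hv, hw] using key

section CharTwo

variable {K : Type*} [Field K] [CharP K 2] {b c d u v w : K}


theorem mul_add_add_one_eq_zero_or_of_quadratic (hbcd : b * c * d = 1)
    (hu : u ^ 2 + (c * b + b + 1) * u + b = 0) (hv : v ^ 2 + (d * c + c + 1) * v + c = 0) :
    u * v + u + 1 = 0 ∨ (u + 1) * v = c * u := by
  have two : (2 : K) = 0 := CharTwo.two_eq_zero
  have hb : b ≠ 0 := left_ne_zero_of_mul (left_ne_zero_of_mul_eq_one hbcd)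
  have key : b * ((u * v + u + 1) * ((u + 1) * v - c * u)) = 0 := by
    linear_combination u * (u + 1) * b * hv - u * (u + 1) * v * hbcd - v * hu +
      b * (u * v - u * c - u ^ 2 * v * c - u ^ 2 * c + v) * two
  simpa [hb, sub_eq_zero] using key

theorem mul_add_add_one_eq_zero_of_quadratic_of_mobius_cycle (hbcd : b * c * d = 1)
    (hu : u ^ 2 + (c * b + b + 1) * u + b = 0) (huv : (u + 1) * v = c * u)
    (hvw : (v + 1) * w = d * v) (hwu : (w + 1) * u = b * w) : u * v + u + 1 = 0 := by
  have two : (2 : K) = 0 := CharTwo.two_eq_zero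
  have hb : b ≠ 0 := left_ne_zero_of_mul (left_ne_zero_of_mul_eq_one hbcd)
  have hu0 : u ≠ 0 := by
    rintro rfl
    exact hb (by simpa using hu)
  have hcd := mul_add_add_one_eq_zero_of_mobius_cycle hbcd hu0 huv hvw hwu
  have hcb : c * b + b + 1 = 0 := by linear_combination b * hcd - hbcd
  have hu_sq : u ^ 2 = b := by linear_combination hu - u * hcb - b * two
  have hu1 : u + 1 ≠ 0 := by
    intro h1
    have hu_one : u = 1 := by linear_combination h1 - two
    have hc : c = 0 := by linear_combination hcb + (c + 1) * hu_sq - (c + 1) * (u + 1) * hu_one - two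
    exact right_ne_zero_of_mul (left_ne_zero_of_mul_eq_one hbcd) hc
  have key : (u + 1) * (u * v + u + 1) = 0 := by
    linear_combination u * huv + (c + 1) * hu_sq + hcb + u * two
  simpa [hu1] using key

theorem mul_map_add_add_one_eq_zero (σ : K →+* K) (hσ : ∀ x, σ (σ (σ x)) = x)
    (hb : b * σ b * σ (σ b) = 1) (hu : u ^ 2 + (σ b * b + b + 1) * u + b = 0) :
    u * σ u + u + 1 = 0 := by
  have hu' : σ u ^ 2 + (σ (σ b) * σ b + σ b + 1) * σ u + σ b = 0 := by
    simpa using congrArg σ hu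
  have hu'' : σ (σ u) ^ 2 + (b * σ (σ b) + σ (σ b) + 1) * σ (σ u) + σ (σ b) = 0 := by
    simpa [hσ] using congrArg σ hu'
  have hb' : σ b * σ (σ b) * b = 1 := by linear_combination hb
  have hb'' : σ (σ b) * b * σ b = 1 := by linear_combination hb
  by_contra hG
  have hG' : σ u * σ (σ u) + σ u + 1 ≠ 0 := by simpa using (map_ne_zero σ).2 hG
  have hG'' : σ (σ u) * u + σ (σ u) + 1 ≠ 0 := by simpa [hσ] using (map_ne_zero σ).2 hG'
  exact hG <| mul_add_add_one_eq_zero_of_quadratic_of_mobius_cycle hb hu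
    ((mul_add_add_one_eq_zero_or_of_quadratic hb hu hu').resolve_left hG)
    ((mul_add_add_one_eq_zero_or_of_quadratic hb' hu' hu'').resolve_left hG')
    ((mul_add_add_one_eq_zero_or_of_quadratic hb'' hu'' hu).resolve_left hG'')

end CharTwo

theorem div_mul_map_div_mul_map_map_div_eq_one {K : Type*} [Field K] (σ : K →+* K)
    (hσ : ∀ x, σ (σ (σ x)) = x) {β : K} (hβ : β ≠ 0) :
    σ β / β * σ (σ β / β) * σ (σ (σ β / β)) = 1 := by
  have h1 : σ β ≠ 0 := (map_ne_zero σ).2 hβ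
  have h2 : σ (σ β) ≠ 0 := (map_ne_zero σ).2 h1
  simp only [map_div₀, hσ]
  field_simp

theorem stmt_1_general (l : ℕ) (q : ℕ) (hq : q = 2 ^ l)
    (K : Type*) [Field K] [Fintype K] (hK : Fintype.card K = q ^ 6)
    (β : K) (hβ : β ≠ 0) (u : K)
    (h : u ^ 2 + (β ^ (q ^ 4 - 1) + β ^ (q ^ 2 - 1) + 1) * u + β ^ (q ^ 2 - 1) = 0) :
    u ^ (q ^ 2 + 1) + u + 1 = 0 := by
  have : Fact (Nat.Prime 2) := ⟨Nat.prime_two⟩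
  have : CharP K 2 := charP_of_card_eq_prime_pow (f := l * 6) (by rw [hK, hq, pow_mul])
  set σ := iterateFrobenius K 2 (2 * l)
  have hσ : ∀ x, σ x = x ^ q ^ 2 := fun x => by rw [iterateFrobenius_def, hq, ← pow_mul, mul_comm]
  have hσ3 : ∀ x, σ (σ (σ x)) = x := fun x => by
    rw [hσ, hσ, hσ, ← pow_mul, ← pow_mul, ← pow_add, ← pow_add, ← hK, FiniteField.pow_card]
  have hq1 : 1 ≤ q := hq ▸ Nat.one_le_two_pow
  have hb : β ^ (q ^ 2 - 1) = σ β / β := by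
    rw [pow_sub₀ _ hβ (Nat.one_le_pow _ _ hq1), hσ, pow_one, div_eq_mul_inv]
  have hcb : β ^ (q ^ 4 - 1) = σ (σ β / β) * (σ β / β) := by
    have : σ β ≠ 0 := (map_ne_zero σ).2 hβ
    rw [pow_sub₀ _ hβ (Nat.one_le_pow _ _ hq1), map_div₀, hσ, hσ, ← pow_mul, ← pow_add]
    field_simp
  rw [hb, hcb] at h
  have key := mul_map_add_add_one_eq_zero σ hσ3 (div_mul_map_div_mul_map_map_div_eq_one σ hσ3 hβ) h
  rw [pow_succ, ← hσ]
  linear_combination key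

theorem stmt_1 (l : ℕ) (hl : 0 < l) (q : ℕ) (hq : q = 2 ^ l)
    (K : Type*) [Field K] [Fintype K] (hK : Fintype.card K = q ^ 6)
    (β : K) (hβ : β ≠ 0) (u : K)
    (h : u ^ 2 + (β ^ (q ^ 4 - 1) + β ^ (q ^ 2 - 1) + 1) * u + β ^ (q ^ 2 - 1) = 0) :
    u ^ (q ^ 2 + 1) + u + 1 = 0 :=
  stmt_1_general l q hq K hK β hβ u h
end

section
/- Let q = 2^s, u ∈ F_{q^3} with u^{q+1} + u + 1 = 0 and u^3 + u + 1 ≠ 0 (or s ≢ 1 mod 3). Let β_1 = u^q and β_2 ∈ F_{q^3} with β_2^{q-1} = u^2. Then the kernel of L_u(β) = uβ^{q^2} + (u+1)β^q + (u^2+u)β equals {xβ_1 + yβ_2 : x, y ∈ F_q}. -/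
/-!
Write `σ` for the Frobenius `x ↦ x ^ q` of `K = 𝔽_{q³}`. In characteristic 2 the hypothesis on `u`
reads `σ u * u = u + 1`, hence `σ² u * (u + 1) = 1`, and these identities give `L_u (σ u) = 0` and,
since `σ β₂ = u² β₂`, `L_u β₂ = 0`. As `L_u` is `𝔽_q`-linear, the `𝔽_q`-span of `β₁, β₂` lies in the
kernel, which has at most `q²` elements because `L_u` is a polynomial of degree `q²`. If `β₂` were an
`𝔽_q`-multiple of `β₁`, comparing `σ β / β` would give `σ² u = u² σ u`, i.e. `u³ + u + 1 = 0`; then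
`u` has order 7 and `u ^ q = u²`, so `2 ^ s ≡ 2 [MOD 7]`, i.e. `s ≡ 1 [MOD 3]`. Hence the span has
`q²` elements and is the whole kernel.
-/

open Polynomial

lemma ncard_setOf_trinomial_eq_zero_le {K : Type*} [Field K] {a : K} (b c : K) (ha : a ≠ 0)
    {m n : ℕ} (hm : 1 < m) (hmn : m < n) :
    {x : K | a * x ^ n + b * x ^ m + c * x = 0}.ncard ≤ n := by
  set p : K[X] := C a * X ^ n + C b * X ^ m + C c * X
  have hdeg : p.natDegree = n := by
    unfold p
    compute_degree!
    all_goals first | omega | simp [ha, hmn.ne', (hm.trans hmn).ne']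
  have hp : p ≠ 0 := by
    intro h0
    simp [h0] at hdeg
    omega
  calc _ = (p.rootSet K).ncard := by
        congr 1; ext x; simp [mem_rootSet, hp, p]
    _ ≤ n := hdeg ▸ p.ncard_rootSet_le K

lemma le_ncard_setOf_pow_eq_self {K : Type*} [Field K] [Finite K] (p : ℕ) [Fact p.Prime]
    [CharP K p] {d n : ℕ} (hK : Nat.card K = p ^ n) (hd : d ∣ n) (hd0 : d ≠ 0) :
    p ^ d ≤ {x : K | x ^ p ^ d = x}.ncard := by
  let := ZMod.algebra K p
  have hfin : Module.finrank (ZMod p) K = n :=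
    Nat.pow_right_injective (Fact.out : p.Prime).two_le
      ((FiniteField.pow_finrank_eq_natCard p K).trans hK)
  obtain ⟨f⟩ := FiniteField.nonempty_algHom_of_finrank_dvd
    (F := ZMod p) (K := GaloisField p d) (L := K) (by rwa [GaloisField.finrank p hd0, hfin])
  have : Fintype (GaloisField p d) := Fintype.ofFinite _
  calc p ^ d = (Set.range f.toRingHom).ncard := by
        rw [Set.ncard_range_of_injective f.toRingHom.injective, GaloisField.card p d hd0]
    _ ≤ _ := by
      refine Set.ncard_le_ncard ?_ (Set.toFinite _)
      rintro _ ⟨y, rfl⟩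
      rw [Set.mem_ofPred_eq, ← map_pow, ← GaloisField.card p d hd0, Nat.card_eq_fintype_card,
        FiniteField.pow_card]

lemma two_pow_modEq_two_iff (s : ℕ) : 2 ^ s ≡ 2 [MOD 7] ↔ s % 3 = 1 := by
  have h : 2 ^ s ≡ 2 ^ (s % 3) [MOD 7] := by
    conv_lhs => rw [← Nat.div_add_mod s 3, pow_add, pow_mul]
    simpa using ((show 2 ^ 3 ≡ 1 [MOD 7] by decide).pow (s / 3)).mul_right (2 ^ (s % 3))
  rw [Nat.ModEq] at h ⊢
  rw [h]
  have : s % 3 < 3 := Nat.mod_lt _ (by norm_num)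
  interval_cases s % 3 <;> decide

section FixedPoints

variable {K : Type*} [Field K] (σ : K →+* K)

lemma injOn_linComb_fixedPoints {β₁ β₂ : K} (hβ₁ : β₁ ≠ 0)
    (hindep : ∀ c, σ c = c → β₂ ≠ c * β₁) :
    Set.InjOn (fun xy : K × K => xy.1 * β₁ + xy.2 * β₂) ({x | σ x = x} ×ˢ {x | σ x = x}) := by
  rintro ⟨x₁, y₁⟩ ⟨hx₁, hy₁⟩ ⟨x₂, y₂⟩ ⟨hx₂, hy₂⟩ (heq : x₁ * β₁ + y₁ * β₂ = x₂ * β₁ + y₂ * β₂)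
  have hy : y₁ = y₂ := by
    by_contra hne
    have hy0 : y₂ - y₁ ≠ 0 := sub_ne_zero.mpr (Ne.symm hne)
    refine hindep ((x₁ - x₂) / (y₂ - y₁)) ?_ ?_
    · rw [map_div₀, map_sub, map_sub, hx₁, hx₂, hy₁, hy₂]
    · field_simp
      linear_combination -heq
  subst hy
  exact Prod.ext (mul_right_cancel₀ hβ₁ (by linear_combination heq)) rfl

lemma ncard_setOf_linComb_fixedPoints {β₁ β₂ : K} (hβ₁ : β₁ ≠ 0)
    (hindep : ∀ c, σ c = c → β₂ ≠ c * β₁) :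
    {β : K | ∃ x y : K, σ x = x ∧ σ y = y ∧ β = x * β₁ + y * β₂}.ncard =
      {x | σ x = x}.ncard ^ 2 := by
  have himage : {β : K | ∃ x y : K, σ x = x ∧ σ y = y ∧ β = x * β₁ + y * β₂} =
      (fun xy : K × K => xy.1 * β₁ + xy.2 * β₂) '' ({x | σ x = x} ×ˢ {x | σ x = x}) := by
    ext β
    simp [eq_comm, and_assoc]
  rw [himage, (injOn_linComb_fixedPoints σ hβ₁ hindep).ncard_image, Set.ncard_prod, sq]

/-- The paper's `L_u`, with `σ` in place of `β ↦ β ^ q`. -/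
def linearizedL (u β : K) : K := u * σ (σ β) + (u + 1) * σ β + (u ^ 2 + u) * β

lemma linearizedL_linComb {u x y : K} (hx : σ x = x) (hy : σ y = y) (β₁ β₂ : K) :
    linearizedL σ u (x * β₁ + y * β₂) = x * linearizedL σ u β₁ + y * linearizedL σ u β₂ := by
  simp only [linearizedL, map_add, map_mul, hx, hy]
  ring

end FixedPoints

section CharTwo

variable {K : Type*} [Field K] [CharP K 2] (σ : K →+* K) {u : K}

lemma map_map_mul_add_one (hu : σ u * u = u + 1) : σ (σ u) * (u + 1) = 1 := by
  have hσu : σ (σ u) * σ u = σ u + 1 := by simpa using congrArg σ hu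
  linear_combination u * hσu - σ (σ u) * hu + hu + u * CharTwo.two_eq_zero (R := K)

lemma linearizedL_map_self (hu : σ u * u = u + 1) (hu₃ : σ (σ (σ u)) = u) :
    linearizedL σ u (σ u) = 0 := by
  unfold linearizedL
  rw [hu₃]
  linear_combination map_map_mul_add_one σ hu + (u + 1) * hu
    + (u ^ 2 + u + 1) * CharTwo.two_eq_zero (R := K)

lemma linearizedL_eq_zero_of_map_eq (hu : σ u * u = u + 1) {β : K} (hβ : σ β = u ^ 2 * β) :
    linearizedL σ u β = 0 := by
  have hσσ : σ (σ β) = (u + 1) ^ 2 * β := by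
    rw [hβ, map_mul, hβ, map_pow]
    linear_combination (σ u * u + u + 1) * β * hu
  unfold linearizedL
  rw [hσσ, hβ]
  linear_combination u * (u + 1) * (u + 1) * β * CharTwo.two_eq_zero (R := K)

lemma setOf_linComb_subset_setOf_linearizedL_eq_zero (hu : σ u * u = u + 1)
    (hu₃ : σ (σ (σ u)) = u) {β : K} (hβ : σ β = u ^ 2 * β) :
    {γ : K | ∃ x y : K, σ x = x ∧ σ y = y ∧ γ = x * σ u + y * β} ⊆
      {γ | linearizedL σ u γ = 0} := by
  rintro _ ⟨x, y, hx, hy, rfl⟩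
  rw [Set.mem_ofPred_eq, linearizedL_linComb σ hx hy, linearizedL_map_self σ hu hu₃,
    linearizedL_eq_zero_of_map_eq σ hu hβ, mul_zero, mul_zero, add_zero]

lemma ne_mul_map_of_cubic_ne_zero (hu : σ u * u = u + 1) (hcubic : u ^ 3 + u + 1 ≠ 0) {β : K}
    (hβ : σ β = u ^ 2 * β) (hβ0 : β ≠ 0) {c : K} (hc : σ c = c) : β ≠ c * σ u := by
  intro hβc
  have hu0 : u ≠ 0 := by rintro rfl; simp at hu
  have hc0 : c ≠ 0 := by rintro rfl; simp_all
  have hσσ : σ (σ u) = u ^ 2 * σ u := by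
    apply mul_left_cancel₀ hc0
    calc c * σ (σ u) = σ β := by rw [hβc, map_mul, hc]
      _ = c * (u ^ 2 * σ u) := by rw [hβ, hβc]; ring
  have key : u * (u ^ 3 + u + 1) = 0 := by
    linear_combination (u + 1) * u * hσσ - u * map_map_mul_add_one σ hu
      + u ^ 2 * (u + 1) * hu + (u ^ 4 + u ^ 3 + u ^ 2) * CharTwo.two_eq_zero (R := K)
  exact hcubic ((mul_eq_zero.mp key).resolve_left hu0)

end CharTwo

lemma two_pow_modEq_two_of_cubic_eq_zero {K : Type*} [Field K] [CharP K 2] {u : K} {s : ℕ}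
    (hu : u ^ 2 ^ s * u = u + 1) (h₃ : u ^ 3 + u + 1 = 0) : 2 ^ s ≡ 2 [MOD 7] := by
  have two : (2 : K) = 0 := CharTwo.two_eq_zero
  have hu0 : u ≠ 0 := by rintro rfl; simp at h₃
  have hu1 : u ≠ 1 := by rintro rfl; exact one_ne_zero (by linear_combination h₃ - two)
  have hpow : u ^ 2 ^ s = u ^ 2 :=
    mul_right_cancel₀ hu0 (by linear_combination hu - h₃ + (u + 1) * two)
  have h₇ : u ^ 7 = 1 := by
    linear_combination (u ^ 4 + u ^ 2 + u + 1) * h₃ - (u ^ 5 + u ^ 4 + u ^ 3 + u ^ 2 + u + 1) * two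
  have : Fact (Nat.Prime 7) := ⟨by norm_num⟩
  rw [← orderOf_eq_prime h₇ hu1]
  exact (isOfFinOrder_iff_pow_eq_one.mpr ⟨7, by norm_num, h₇⟩).pow_eq_pow_iff_modEq.mp hpow

theorem stmt_14 (s : ℕ) (hs : 0 < s) (q : ℕ) (hq : q = 2 ^ s)
    (K : Type*) [Field K] [Fintype K] (hK : Fintype.card K = q ^ 3)
    (u : K) (h : u ^ (q + 1) + u + 1 = 0)
    (h' : u ^ 3 + u + 1 ≠ 0 ∨ s % 3 ≠ 1)
    (β₁ β₂ : K) (hβ₁ : β₁ = u ^ q) (hβ₂ : β₂ ^ (q - 1) = u ^ 2) :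
    {β : K | u * β ^ q ^ 2 + (u + 1) * β ^ q + (u ^ 2 + u) * β = 0} =
      {β : K | ∃ x y : K, x ^ q = x ∧ y ^ q = y ∧ β = x * β₁ + y * β₂} := by
  subst hq hβ₁
  have : Fact (Nat.Prime 2) := ⟨Nat.prime_two⟩
  have : CharP K 2 := charP_of_card_eq_prime_pow (p := 2) (f := s * 3) (by rw [hK, pow_mul])
  set σ := iterateFrobenius K 2 s
  have hσ : ∀ x : K, x ^ 2 ^ s = σ x := fun _ => rfl
  have hσσ : ∀ x : K, x ^ (2 ^ s) ^ 2 = σ (σ x) := fun x => by rw [sq, pow_mul, hσ, hσ]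
  have hσ₃ : σ (σ (σ u)) = u := by
    rw [← hσ, ← hσ, ← hσ, ← pow_mul, ← pow_mul, ← pow_three, ← hK, FiniteField.pow_card]
  have hu_pow : u ^ 2 ^ s * u = u + 1 := by
    linear_combination h - (u + 1) * CharTwo.two_eq_zero (R := K)
  have hu : σ u * u = u + 1 := hu_pow
  have hu0 : u ≠ 0 := by rintro rfl; simp at hu
  have hq : 1 < 2 ^ s := Nat.one_lt_two_pow hs.ne'
  have hβ₂0 : β₂ ≠ 0 := by
    rintro rfl
    exact pow_ne_zero 2 hu0 (hβ₂ ▸ zero_pow (Nat.sub_ne_zero_of_lt hq))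
  have hβ₂σ : σ β₂ = u ^ 2 * β₂ := by
    rw [← hσ, ← Nat.sub_add_cancel Nat.one_le_two_pow, pow_succ, hβ₂]
  have hcubic : u ^ 3 + u + 1 ≠ 0 := fun h₃ => h'.elim (· h₃) fun hs₃ =>
    hs₃ ((two_pow_modEq_two_iff s).mp (two_pow_modEq_two_of_cubic_eq_zero hu_pow h₃))
  simp only [hσσ, hσ]
  refine (Set.eq_of_subset_of_ncard_le
    (setOf_linComb_subset_setOf_linearizedL_eq_zero σ hu hσ₃ hβ₂σ) ?_ (Set.toFinite _)).symm
  calc _ ≤ (2 ^ s) ^ 2 := by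
        simpa only [hσσ, hσ, linearizedL] using
          ncard_setOf_trinomial_eq_zero_le (u + 1) (u ^ 2 + u) hu0 hq (lt_self_pow₀ hq one_lt_two)
    _ ≤ {x | σ x = x}.ncard ^ 2 := Nat.pow_le_pow_left (le_ncard_setOf_pow_eq_self 2
        (by rw [Nat.card_eq_fintype_card, hK, ← pow_mul]) (dvd_mul_right s 3) hs.ne') 2
    _ = _ := (ncard_setOf_linComb_fixedPoints σ (pow_ne_zero _ hu0)
        fun _ hc => ne_mul_map_of_cubic_ne_zero σ hu hcubic hβ₂σ hβ₂0 hc).symm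
end

section
/- Let q = 2^s and β ∈ F_{q^3} with Tr_{q^3/q}(β) ≠ 0. If Tr_{q^3/2}(β^{q+1} / Tr_{q^3/q}(β)^2) = 0, then there exists u ∈ F_{q^3} with u^2 + (β^{q^2-1} + β^{q-1} + 1)u + β^{q-1} = 0; moreover any such u satisfies u^{q+1} + u + 1 = 0 and βu + β^q + β ∈ F_q. -/
/-!
Let `σ x = x ^ q`, a field automorphism with `σ³ = 1`, and `T = β + σ β + σ² β ≠ 0`. Multiplying
by `β²` turns the quadratic in `u` into `w² + T w + β σβ = 0` for `w = β u`.

Existence is Artin–Schreier: `x ↦ x² + x` is two-to-one into the elements of absolute trace zero,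
which are the roots of a nonzero polynomial of degree `2 ^ (n - 1)`, so it hits all of them; in
particular `β σβ / T² = v² + v` for some `v`, and `w = T v` is a root.

For a root `w`, `z = w + σβ + β` solves `z² + T z + N = 0` with `N = β σβ + σβ σ²β + σ²β β`.
Both `T` and `N` are fixed by `σ`, so `σ z` is a root too, i.e. `σ z = z` or `σ z = z + T`; the
latter gives `σ² z = z` and then `z = σ³ z = σ z`, forcing `T = 0`. Once `σ z = z`, expanding
`β σβ (u σu + u + 1)` gives back `w² + T w + β σβ = 0`.
-/

open Finset Polynomial

section CharTwo

variable {R : Type*} [CommRing R] [CharP R 2]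

lemma sum_range_sq_add_self_pow_two_pow (x : R) (n : ℕ) :
    ∑ i ∈ range n, (x ^ 2 + x) ^ 2 ^ i = x ^ 2 ^ n + x := by
  induction n with
  | zero => simp [CharTwo.add_self_eq_zero]
  | succ n ih =>
    rw [sum_range_succ, ih, add_pow_char_pow, ← pow_mul, ← pow_succ']
    linear_combination x ^ 2 ^ n * CharTwo.two_eq_zero (R := R)

variable [NoZeroDivisors R]

lemma eq_or_eq_add_of_sq_add_mul_add_eq_zero {T N y z : R} (hz : z ^ 2 + T * z + N = 0)
    (hy : y ^ 2 + T * y + N = 0) : y = z ∨ y = z + T := by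
  have h2 : (2 : R) = 0 := CharTwo.two_eq_zero
  have : (y + z) * (y + z + T) = 0 := by linear_combination hy + hz + (y * z - N) * h2
  rcases mul_eq_zero.mp this with h | h
  · exact .inl (by linear_combination h - z * h2)
  · exact .inr (by linear_combination h - (z + T) * h2)

end CharTwo

section FiniteField

variable {K : Type*} [Field K] [Fintype K]

lemma card_filter_sum_range_pow_two_pow_eq_zero_le [DecidableEq K] {n : ℕ} (hn : 0 < n) :
    #{x : K | ∑ i ∈ range n, x ^ 2 ^ i = 0} ≤ 2 ^ (n - 1) := by
  set P : K[X] := ∑ i ∈ range n, X ^ 2 ^ i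
  have hP : P ≠ 0 := by
    intro h0
    have := congrArg (coeff · (2 ^ (n - 1))) h0
    simp [P, coeff_X_pow, hn] at this
  calc #{x : K | ∑ i ∈ range n, x ^ 2 ^ i = 0}
      ≤ P.natDegree := by
        refine card_le_degree_of_subset_roots fun x hx ↦ ?_
        simpa [mem_roots hP, P, eval_finsetSum] using hx
    _ ≤ 2 ^ (n - 1) := natDegree_sum_le_of_forall_le _ _ fun i hi ↦ by
        simpa using Nat.pow_le_pow_right two_pos (by simp at hi; omega)

lemma card_le_two_mul_card_image_sq_add_self [DecidableEq K] [CharP K 2] :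
    Fintype.card K ≤ 2 * #(univ.image fun x : K ↦ x ^ 2 + x) := by
  refine card_le_mul_card_image _ 2 fun b hb ↦ ?_
  obtain ⟨x, -, rfl⟩ := mem_image.mp hb
  calc #{y ∈ univ | y ^ 2 + y = x ^ 2 + x} ≤ #{x, x + 1} := card_le_card fun y hy ↦ by
        have hroot : ∀ z : K, z ^ 2 + 1 * z + -(x ^ 2 + x) = 0 ↔ z ^ 2 + z = x ^ 2 + x := by
          intro z; rw [one_mul, ← sub_eq_add_neg, sub_eq_zero]
        simpa using eq_or_eq_add_of_sq_add_mul_add_eq_zero ((hroot x).2 rfl)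
          ((hroot y).2 (mem_filter.mp hy).2)
    _ ≤ 2 := card_le_two

theorem exists_sq_add_self_eq_of_sum_range_pow_two_pow_eq_zero {n : ℕ}
    (hcard : Fintype.card K = 2 ^ n) {a : K} (ha : ∑ i ∈ range n, a ^ 2 ^ i = 0) :
    ∃ v, v ^ 2 + v = a := by
  classical
  have := charP_of_card_eq_prime_pow hcard
  have hn : 0 < n := Nat.pos_of_ne_zero <| Nat.one_lt_two_pow_iff.mp (hcard ▸ Fintype.one_lt_card)
  set S := univ.image fun x : K ↦ x ^ 2 + x
  have hS : S ⊆ ({x | ∑ i ∈ range n, x ^ 2 ^ i = 0} : Finset K) := by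
    simp only [S, image_subset_iff, mem_filter_univ, mem_univ, true_implies,
      sum_range_sq_add_self_pow_two_pow]
    intro x
    rw [← hcard, FiniteField.pow_card, CharTwo.add_self_eq_zero]
  have hS_eq := eq_of_subset_of_card_le hS <| by
    have hS_card : Fintype.card K ≤ 2 * #S := card_le_two_mul_card_image_sq_add_self
    have := card_filter_sum_range_pow_two_pow_eq_zero_le (K := K) hn
    rw [hcard, ← Nat.two_pow_pred_mul_two hn] at hS_card
    omega
  have haS : a ∈ S := hS_eq ▸ by simpa using ha
  simpa [S] using haS

end FiniteField

section CubicAutomorphism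

variable {R : Type*} [CommRing R] [NoZeroDivisors R] [CharP R 2] (σ : R →+* R)

lemma apply_eq_self_of_sq_add_mul_add_eq_zero (hσ : ∀ x, σ (σ (σ x)) = x) {T N z : R}
    (hT : σ T = T) (hT₀ : T ≠ 0) (hN : σ N = N) (hz : z ^ 2 + T * z + N = 0) : σ z = z := by
  have hσz : σ z ^ 2 + T * σ z + N = 0 := by
    simpa only [map_add, map_mul, map_pow, hT, hN, map_zero] using congrArg σ hz
  refine (eq_or_eq_add_of_sq_add_mul_add_eq_zero hz hσz).resolve_right fun h ↦ hT₀ ?_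
  have hσσz : σ (σ z) = z := by
    rw [h, map_add, h, hT]
    linear_combination T * CharTwo.two_eq_zero (R := R)
  have := hσ z
  rw [hσσz, h] at this
  linear_combination this

lemma apply_add_add_eq_self_of_sq_add_mul_add_eq_zero (hσ : ∀ x, σ (σ (σ x)) = x) {β w : R}
    (hT : β + σ β + σ (σ β) ≠ 0) (hw : w ^ 2 + (β + σ β + σ (σ β)) * w + β * σ β = 0) :
    σ (w + σ β + β) = w + σ β + β := by
  refine apply_eq_self_of_sq_add_mul_add_eq_zero σ hσ (T := β + σ β + σ (σ β))
    (N := β * σ β + σ β * σ (σ β) + σ (σ β) * β) ?_ hT ?_ ?_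
  · simp only [map_add, hσ]; ring
  · simp only [map_add, map_mul, hσ]; ring
  · linear_combination hw + (w * σ β + w * β + 2 * σ β * β + σ β * σ (σ β) + σ β ^ 2
      + β * σ (σ β) + β ^ 2) * CharTwo.two_eq_zero (R := R)

lemma mul_apply_add_add_eq_zero (hσ : ∀ x, σ (σ (σ x)) = x) {β u : R} (hβ : β ≠ 0)
    (hT : β + σ β + σ (σ β) ≠ 0)
    (hu : (β * u) ^ 2 + (β + σ β + σ (σ β)) * (β * u) + β * σ β = 0) :
    u * σ u + u + 1 = 0 := by
  have hσβ : σ β ≠ 0 := fun h ↦ hβ (by rw [← hσ β, h, map_zero, map_zero])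
  have hfix := apply_add_add_eq_self_of_sq_add_mul_add_eq_zero σ hσ hT hu
  rw [map_add, map_add, map_mul] at hfix
  refine (mul_eq_zero.mp ?_).resolve_left (mul_ne_zero hβ hσβ)
  linear_combination hu + β * u * hfix - β * u * σ (σ β) * CharTwo.two_eq_zero (R := R)

end CubicAutomorphism

lemma sq_add_div_mul_add_div_eq_zero_iff {K : Type*} [Field K] {β b₁ b₂ u : K} (hβ : β ≠ 0) :
    u ^ 2 + (b₂ / β + b₁ / β + 1) * u + b₁ / β = 0 ↔
      (β * u) ^ 2 + (β + b₁ + b₂) * (β * u) + β * b₁ = 0 := by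
  have h : β ^ 2 * (u ^ 2 + (b₂ / β + b₁ / β + 1) * u + b₁ / β) =
      (β * u) ^ 2 + (β + b₁ + b₂) * (β * u) + β * b₁ := by
    field_simp
    ring
  rw [← h, mul_eq_zero, or_iff_right (pow_ne_zero 2 hβ)]

theorem stmt_18_general (s : ℕ) (q : ℕ) (hq : q = 2 ^ s)
    (K : Type*) [Field K] [Fintype K] (hK : Fintype.card K = q ^ 3)
    (β : K) (htr : β + β ^ q + β ^ q ^ 2 ≠ 0)
    (h : ∑ i ∈ Finset.range (3 * s),
        (β ^ (q + 1) / (β + β ^ q + β ^ q ^ 2) ^ 2) ^ 2 ^ i = 0) :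
    (∃ u : K, u ^ 2 + (β ^ (q ^ 2 - 1) + β ^ (q - 1) + 1) * u + β ^ (q - 1) = 0) ∧
      ∀ u : K, u ^ 2 + (β ^ (q ^ 2 - 1) + β ^ (q - 1) + 1) * u + β ^ (q - 1) = 0 →
        u ^ (q + 1) + u + 1 = 0 ∧ (β * u + β ^ q + β) ^ q = β * u + β ^ q + β := by
  have hcard : Fintype.card K = 2 ^ (3 * s) := by rw [hK, hq, ← pow_mul, mul_comm]
  have := charP_of_card_eq_prime_pow hcard
  set σ := iterateFrobenius K 2 s
  have hσ (x : K) : σ x = x ^ q := by rw [hq]; rfl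
  have hσ₃ (x : K) : σ (σ (σ x)) = x := by
    rw [hσ, hσ, hσ, ← pow_mul, ← pow_mul, ← pow_three, ← hK, FiniteField.pow_card]
  have hβ : β ≠ 0 := by rintro rfl; simp [hq] at htr
  have hq₁ : 1 ≤ q := hq ▸ Nat.one_le_two_pow
  have hσσβ : σ (σ β) = β ^ q ^ 2 := by rw [hσ, hσ, ← pow_mul, sq]
  have hcoeff : β ^ (q ^ 2 - 1) = σ (σ β) / β ∧ β ^ (q - 1) = σ β / β := by
    rw [pow_sub₀ _ hβ hq₁, pow_sub₀ _ hβ (Nat.one_le_pow _ _ hq₁), hσσβ, hσ, pow_one]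
    exact ⟨(div_eq_mul_inv ..).symm, (div_eq_mul_inv ..).symm⟩
  rw [← hσσβ, ← hσ] at htr
  rw [pow_succ, ← hσσβ, ← hσ] at h
  simp only [hcoeff.1, hcoeff.2, sq_add_div_mul_add_div_eq_zero_iff hβ]
  refine ⟨?_, fun u hu ↦ ⟨?_, ?_⟩⟩
  · obtain ⟨v, hv⟩ := exists_sq_add_self_eq_of_sum_range_pow_two_pow_eq_zero hcard h
    refine ⟨(β + σ β + σ (σ β)) * v / β, ?_⟩
    rw [eq_div_iff (pow_ne_zero 2 htr)] at hv
    rw [mul_div_cancel₀ _ hβ]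
    linear_combination hv + β * σ β * CharTwo.two_eq_zero (R := K)
  · rw [pow_succ', ← hσ]
    exact mul_apply_add_add_eq_zero σ hσ₃ hβ htr hu
  · rw [← hσ, ← hσ]
    exact apply_add_add_eq_self_of_sq_add_mul_add_eq_zero σ hσ₃ htr hu

theorem stmt_18 (s : ℕ) (hs : 0 < s) (q : ℕ) (hq : q = 2 ^ s)
    (K : Type*) [Field K] [Fintype K] (hK : Fintype.card K = q ^ 3)
    (β : K) (htr : β + β ^ q + β ^ q ^ 2 ≠ 0)
    (h : ∑ i ∈ Finset.range (3 * s),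
        (β ^ (q + 1) / (β + β ^ q + β ^ q ^ 2) ^ 2) ^ 2 ^ i = 0) :
    (∃ u : K, u ^ 2 + (β ^ (q ^ 2 - 1) + β ^ (q - 1) + 1) * u + β ^ (q - 1) = 0) ∧
      ∀ u : K, u ^ 2 + (β ^ (q ^ 2 - 1) + β ^ (q - 1) + 1) * u + β ^ (q - 1) = 0 →
        u ^ (q + 1) + u + 1 = 0 ∧ (β * u + β ^ q + β) ^ q = β * u + β ^ q + β :=
  stmt_18_general s q hq K hK β htr h
end
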